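/- arXiv:1906.10306 — 3 statements merged into one kernel-verified Lean document; each statement's English description precedes it below -/
import Mathlib

section
/- Performance difference identity: for a discounted MDP with finite state and action spaces, discount γ ∈ (0,1), bounded reward r, any two policies π and π*, and ν* the stationary distribution of π* (i.e., ν* is invariant under the transition kernel induced by π*), it holds that E_{s∼ν*}[V^π(s)] − E_{s∼ν*}[V^{π*}(s)] = (1−γ)^{-1} · E_{s∼ν*}[ ⟨Q^π(s,·), π(·|s) − π*(·|s)⟩ ], where ⟨·,·⟩ denotes the inner product over actions. -/
open Finset

/-- Performance difference identity (Kakade–Langford) for finite discounted MDPs, stated via the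
Bellman equations and stationarity of `ν*` under `π*`. -/
theorem performance_difference {S A : Type*} [Fintype S] [Fintype A] [Nonempty S] [Nonempty A]
    (P : S → A → S → ℝ) (hPnn : ∀ s a s', 0 ≤ P s a s') (hPsum : ∀ s a, ∑ s', P s a s' = 1)
    (r : S → A → ℝ) (Rmax : ℝ) (hr : ∀ s a, |r s a| ≤ Rmax)
    (γ : ℝ) (hγ0 : 0 < γ) (hγ1 : γ < 1)
    (π πstar : S → A → ℝ)
    (hπnn : ∀ s a, 0 ≤ π s a) (hπsum : ∀ s, ∑ a, π s a = 1)
    (hπsnn : ∀ s a, 0 ≤ πstar s a) (hπssum : ∀ s, ∑ a, πstar s a = 1)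
    (νstar : S → ℝ) (hνnn : ∀ s, 0 ≤ νstar s) (hνsum : ∑ s, νstar s = 1)
    (hstat : ∀ s', ∑ s, νstar s * ∑ a, πstar s a * P s a s' = νstar s')
    (V Vstar : S → ℝ) (Q : S → A → ℝ)
    (hQ : ∀ s a, Q s a = (1 - γ) * r s a + γ * ∑ s', P s a s' * V s')
    (hV : ∀ s, V s = ∑ a, π s a * Q s a)
    (hVstar : ∀ s, Vstar s =
      ∑ a, πstar s a * ((1 - γ) * r s a + γ * ∑ s', P s a s' * Vstar s')) :
    (∑ s, νstar s * V s) - (∑ s, νstar s * Vstar s) =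
      (1 - γ)⁻¹ * ∑ s, νstar s * ∑ a, Q s a * (π s a - πstar s a) := by
  set f : S → ℝ := fun s => V s - Vstar s with hf
  -- pointwise Bellman difference
  have h1 : ∀ s, ∑ a, πstar s a * Q s a
      = Vstar s + γ * ∑ a, πstar s a * ∑ s', P s a s' * f s' := by
    intro s
    rw [hVstar s, Finset.mul_sum, ← Finset.sum_add_distrib]
    refine Finset.sum_congr rfl fun a _ => ?_
    have hsub : ∑ s', P s a s' * f s'
        = (∑ s', P s a s' * V s') - ∑ s', P s a s' * Vstar s' := by
      rw [← Finset.sum_sub_distrib]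
      exact Finset.sum_congr rfl fun s' _ => by simp [hf]; ring
    rw [hQ s a, hsub]; ring
  -- sum swap + stationarity
  have hswap : ∑ s, νstar s * ∑ a, πstar s a * ∑ s', P s a s' * f s'
      = ∑ s', νstar s' * f s' := by
    have swap3 : ∀ (g : S → A → S → ℝ),
        (∑ s, ∑ a, ∑ s', g s a s') = ∑ s', ∑ s, ∑ a, g s a s' := by
      intro g
      calc (∑ s, ∑ a, ∑ s', g s a s')
          = ∑ s, ∑ s', ∑ a, g s a s' :=
            Finset.sum_congr rfl fun s _ => Finset.sum_comm
        _ = ∑ s', ∑ s, ∑ a, g s a s' := Finset.sum_comm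
    calc ∑ s, νstar s * ∑ a, πstar s a * ∑ s', P s a s' * f s'
        = ∑ s, ∑ a, ∑ s', νstar s * (πstar s a * (P s a s' * f s')) := by
          simp_rw [Finset.mul_sum]
      _ = ∑ s', ∑ s, ∑ a, νstar s * (πstar s a * (P s a s' * f s')) := swap3 _
      _ = ∑ s', (∑ s, νstar s * ∑ a, πstar s a * P s a s') * f s' := by
          refine Finset.sum_congr rfl fun s' _ => ?_
          simp only [Finset.sum_mul, Finset.mul_sum]
          exact Finset.sum_congr rfl fun s _ =>
            Finset.sum_congr rfl fun a _ => by ring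
      _ = ∑ s', νstar s' * f s' := Finset.sum_congr rfl fun s' _ => by rw [hstat s']
  have key : ∑ s, νstar s * ∑ a, πstar s a * Q s a
      = (∑ s, νstar s * Vstar s) + γ * ∑ s', νstar s' * f s' := by
    calc ∑ s, νstar s * ∑ a, πstar s a * Q s a
        = ∑ s, (νstar s * Vstar s
            + γ * (νstar s * ∑ a, πstar s a * ∑ s', P s a s' * f s')) := by
          refine Finset.sum_congr rfl fun s _ => ?_
          rw [h1 s]; ring
      _ = (∑ s, νstar s * Vstar s)
            + γ * ∑ s, νstar s * ∑ a, πstar s a * ∑ s', P s a s' * f s' := by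
          rw [Finset.sum_add_distrib, ← Finset.mul_sum]
      _ = (∑ s, νstar s * Vstar s) + γ * ∑ s', νstar s' * f s' := by rw [hswap]
  have hVsum : ∑ s, νstar s * ∑ a, π s a * Q s a = ∑ s, νstar s * V s :=
    Finset.sum_congr rfl fun s _ => by rw [← hV s]
  have hsplit : ∑ s, νstar s * ∑ a, Q s a * (π s a - πstar s a)
      = (∑ s, νstar s * ∑ a, π s a * Q s a) - ∑ s, νstar s * ∑ a, πstar s a * Q s a := by
    rw [← Finset.sum_sub_distrib]
    refine Finset.sum_congr rfl fun s _ => ?_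
    rw [← mul_sub, ← Finset.sum_sub_distrib]
    congr 1
    exact Finset.sum_congr rfl fun a _ => by ring
  have hfsum : ∑ s', νstar s' * f s'
      = (∑ s, νstar s * V s) - ∑ s, νstar s * Vstar s := by
    rw [← Finset.sum_sub_distrib]
    exact Finset.sum_congr rfl fun s _ => by simp [hf]; ring
  rw [hsplit, hVsum, key, hfsum]
  have hne : (1 : ℝ) - γ ≠ 0 := by linarith
  field_simp
  ring
end

section
/- One-point monotonicity: for a discounted MDP, let π* be an optimal policy (maximizing V^π(s) for every s simultaneously) with stationary distribution ν*. Then for every policy π, E_{s∼ν*}[ ⟨Q^π(s,·), π(·|s) − π*(·|s)⟩ ] ≤ 0. -/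
open Finset

/-- One-point monotonicity: if `π*` is optimal (its value dominates pointwise) with stationary
distribution `ν*`, then `E_{ν*}[⟨Q^π(s,·), π(·|s) − π*(·|s)⟩] ≤ 0` for every policy `π`. -/
theorem one_point_monotonicity {S A : Type*} [Fintype S] [Fintype A] [Nonempty S] [Nonempty A]
    (P : S → A → S → ℝ) (hPnn : ∀ s a s', 0 ≤ P s a s') (hPsum : ∀ s a, ∑ s', P s a s' = 1)
    (r : S → A → ℝ) (Rmax : ℝ) (hr : ∀ s a, |r s a| ≤ Rmax)
    (γ : ℝ) (hγ0 : 0 < γ) (hγ1 : γ < 1)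
    (π πstar : S → A → ℝ)
    (hπnn : ∀ s a, 0 ≤ π s a) (hπsum : ∀ s, ∑ a, π s a = 1)
    (hπsnn : ∀ s a, 0 ≤ πstar s a) (hπssum : ∀ s, ∑ a, πstar s a = 1)
    (νstar : S → ℝ) (hνnn : ∀ s, 0 ≤ νstar s) (hνsum : ∑ s, νstar s = 1)
    (hstat : ∀ s', ∑ s, νstar s * ∑ a, πstar s a * P s a s' = νstar s')
    (V Vstar : S → ℝ) (Q : S → A → ℝ)
    (hQ : ∀ s a, Q s a = (1 - γ) * r s a + γ * ∑ s', P s a s' * V s')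
    (hV : ∀ s, V s = ∑ a, π s a * Q s a)
    (hVstar : ∀ s, Vstar s =
      ∑ a, πstar s a * ((1 - γ) * r s a + γ * ∑ s', P s a s' * Vstar s'))
    (hopt : ∀ s, V s ≤ Vstar s) :
    ∑ s, νstar s * ∑ a, Q s a * (π s a - πstar s a) ≤ 0 := by

  set D : S → ℝ := fun s => V s - Vstar s with hD
  have hDle : ∀ s, D s ≤ 0 := fun s => sub_nonpos.mpr (hopt s)
  -- Step 1: per-state decomposition of the inner product
  have h1 : ∀ s, ∑ a, Q s a * (π s a - πstar s a)
      = D s + (Vstar s - ∑ a, πstar s a * Q s a) := by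
    intro s
    have h2 : ∑ a, Q s a * π s a = V s := by
      rw [hV s]; exact Finset.sum_congr rfl fun a _ => mul_comm _ _
    have h3 : ∑ a, Q s a * πstar s a = ∑ a, πstar s a * Q s a :=
      Finset.sum_congr rfl fun a _ => mul_comm _ _
    simp only [mul_sub]
    rw [Finset.sum_sub_distrib, h2, h3]
    simp only [hD]; ring
  -- Step 2: express ∑ π* Q via Vstar and the gap D
  have h2 : ∀ s, ∑ a, πstar s a * Q s a
      = Vstar s + γ * ∑ a, πstar s a * ∑ s', P s a s' * D s' := by
    intro s
    rw [hVstar s, Finset.mul_sum, ← Finset.sum_add_distrib]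
    refine Finset.sum_congr rfl fun a _ => ?_
    have hsplit : ∑ s', P s a s' * D s'
        = (∑ s', P s a s' * V s') - ∑ s', P s a s' * Vstar s' := by
      rw [← Finset.sum_sub_distrib]
      exact Finset.sum_congr rfl fun s' _ => by simp only [hD]; ring
    rw [hQ s a, hsplit]; ring
  -- Step 3: stationarity swap
  have hswap : ∑ s, νstar s * ∑ a, πstar s a * ∑ s', P s a s' * D s'
      = ∑ s', νstar s' * D s' := by
    have step : ∀ s, νstar s * ∑ a, πstar s a * ∑ s', P s a s' * D s'
        = ∑ s', (νstar s * ∑ a, πstar s a * P s a s') * D s' := by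
      intro s
      rw [Finset.mul_sum]
      simp only [Finset.mul_sum, Finset.sum_mul]
      rw [Finset.sum_comm]
      refine Finset.sum_congr rfl fun s' _ => Finset.sum_congr rfl fun a _ => by ring
    calc ∑ s, νstar s * ∑ a, πstar s a * ∑ s', P s a s' * D s'
        = ∑ s, ∑ s', (νstar s * ∑ a, πstar s a * P s a s') * D s' :=
          Finset.sum_congr rfl fun s _ => step s
      _ = ∑ s', (∑ s, νstar s * ∑ a, πstar s a * P s a s') * D s' := by
          rw [Finset.sum_comm]; simp [Finset.sum_mul]
      _ = ∑ s', νstar s' * D s' :=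
          Finset.sum_congr rfl fun s' _ => by rw [hstat s']
  -- Combine
  have hmain : ∑ s, νstar s * ∑ a, Q s a * (π s a - πstar s a)
      = (1 - γ) * ∑ s, νstar s * D s := by
    have : ∀ s, νstar s * ∑ a, Q s a * (π s a - πstar s a)
        = νstar s * D s - γ * (νstar s * ∑ a, πstar s a * ∑ s', P s a s' * D s') := by
      intro s; rw [h1 s, h2 s]; ring
    rw [Finset.sum_congr rfl fun s _ => this s, Finset.sum_sub_distrib,
      ← Finset.mul_sum, hswap]
    rw [Finset.mul_sum, Finset.mul_sum, ← Finset.sum_sub_distrib]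
    exact Finset.sum_congr rfl fun s _ => by ring
  rw [hmain]
  apply mul_nonpos_of_nonneg_of_nonpos (by linarith)
  exact Finset.sum_nonpos fun s _ => mul_nonpos_of_nonneg_of_nonpos (hνnn s) (hDle s)
end

section
/- Pinsker-type one-step mirror descent inequality for softmax policies: let A be a finite set, let π_k, π_{k+1}, π', π* be strictly positive probability distributions on A with π_k ∝ exp(f_k/τ_k), π_{k+1} ∝ exp(f_{k+1}/τ_{k+1}), π' ∝ exp(q/β + f_k/τ_k). Then KL(π*∥π_{k+1}) − KL(π*∥π_k) ≤ ⟨log(π_{k+1}/π'), π_k − π*⟩ − β^{-1}⟨q, π* − π_k⟩ − (1/2)‖π_{k+1} − π_k‖₁² − ⟨τ_{k+1}^{-1} f_{k+1} − τ_k^{-1} f_k, π_k − π_{k+1}⟩, where log(π_{k+1}/π') denotes the pointwise log-ratio, ⟨u,v⟩ = Σ_a u(a)v(a), and ‖·‖₁ is the ℓ₁ norm. -/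
/-!
With the potentials `z = f / τ`, every log-partition constant pairs with a difference of two
probability vectors and drops out, and so do the `q`-terms; what remains of the claim is exactly
Pinsker's inequality `½ ‖π_{k+1} - π_k‖₁² ≤ KL(π_{k+1} ‖ π_k)`. Pinsker follows by summing the
pointwise bound `3 (a - b)² / (2 (a + 2b)) ≤ a log (a / b) - a + b` and applying Cauchy–Schwarz in
Sedrakyan's form, using `∑ (p + 2 q) = 3`.
-/

open Real Set Finset InformationTheory

lemma le_of_hasDerivAt_nonpos_of_nonneg {f f' : ℝ → ℝ} {a c x : ℝ} (hac : a < c) (hax : a < x)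
    (hf : ∀ y, a < y → HasDerivAt f (f' y) y)
    (hf'_nonpos : ∀ y, a < y → y < c → f' y ≤ 0) (hf'_nonneg : ∀ y, c < y → 0 ≤ f' y) :
    f c ≤ f x := by
  have hcont : ContinuousOn f (Ioi a) := fun y hy => (hf y hy).continuousAt.continuousWithinAt
  rcases le_total x c with hxc | hcx
  · refine antitoneOn_of_hasDerivWithinAt_nonpos (convex_Ioc a c)
      (hcont.mono Ioc_subset_Ioi_self) (f' := f') (fun y hy => ?_) (fun y hy => ?_)
      ⟨hax, hxc⟩ ⟨hac, le_rfl⟩ hxc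
    all_goals rw [interior_Ioc] at hy
    · exact (hf y hy.1).hasDerivWithinAt
    · exact hf'_nonpos y hy.1 hy.2
  · refine monotoneOn_of_hasDerivWithinAt_nonneg (convex_Ici c)
      (hcont.mono (Ici_subset_Ioi.2 hac)) (f' := f') (fun y hy => ?_) (fun y hy => ?_)
      self_mem_Ici hcx hcx
    all_goals rw [interior_Ici] at hy
    · exact (hf y (hac.trans hy)).hasDerivWithinAt
    · exact hf'_nonneg y hy

lemma monotoneOn_add_one_mul_log_sub_two_mul :
    MonotoneOn (fun x => (x + 1) * log x - 2 * (x - 1)) (Ioi 0) := by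
  have hderiv : ∀ x : ℝ, 0 < x →
      HasDerivAt (fun x => (x + 1) * log x - 2 * (x - 1)) (log x + x⁻¹ - 1) x := fun x hx => by
    refine (((hasDerivAt_id' x).add_const 1).mul (hasDerivAt_log hx.ne')).sub
      (((hasDerivAt_id' x).sub_const 1).const_mul 2) |>.congr_deriv ?_
    field_simp
    ring
  refine monotoneOn_of_hasDerivWithinAt_nonneg (convex_Ioi 0) (f' := fun x => log x + x⁻¹ - 1)
    (fun x hx => (hderiv x hx).continuousAt.continuousWithinAt) (fun x hx => ?_) (fun x hx => ?_)
  all_goals rw [interior_Ioi] at hx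
  · exact (hderiv x hx).hasDerivWithinAt
  · linarith [one_sub_inv_le_log_of_pos hx]

lemma three_halves_mul_sub_one_sq_le_mul_klFun {x : ℝ} (hx : 0 < x) :
    3 / 2 * (x - 1) ^ 2 ≤ (x + 2) * klFun x := by
  have hderiv : ∀ y, 0 < y → HasDerivAt (fun x => (x + 2) * klFun x - 3 / 2 * (x - 1) ^ 2)
      (2 * ((y + 1) * log y - 2 * (y - 1))) y := fun y hy => by
    refine (((hasDerivAt_id' y).add_const 2).mul (hasDerivAt_klFun hy.ne')).sub
      ((((hasDerivAt_id' y).sub_const 1).pow 2).const_mul (3 / 2)) |>.congr_deriv ?_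
    rw [klFun_apply]
    ring
  have hH {y z : ℝ} (hy : 0 < y) (hyz : y ≤ z) :
      (y + 1) * log y - 2 * (y - 1) ≤ (z + 1) * log z - 2 * (z - 1) :=
    monotoneOn_add_one_mul_log_sub_two_mul hy (hy.trans_le hyz) hyz
  have hmin := le_of_hasDerivAt_nonpos_of_nonneg one_pos hx hderiv
    (fun y hy hy1 => by linarith [hH hy hy1.le, log_one])
    (fun y hy => by linarith [hH one_pos hy.le, log_one])
  linarith [klFun_one]

lemma three_mul_sub_sq_div_le_mul_log_sub {a b : ℝ} (ha : 0 < a) (hb : 0 < b) :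
    3 * (a - b) ^ 2 / (2 * (a + 2 * b)) ≤ a * (log a - log b) - a + b := by
  have hx := three_halves_mul_sub_one_sq_le_mul_klFun (div_pos ha hb)
  have hkl : a * (log a - log b) - a + b = b * klFun (a / b) := by
    rw [klFun_apply, log_div ha.ne' hb.ne']
    field_simp
    ring
  rw [hkl, div_le_iff₀ (by positivity)]
  calc 3 * (a - b) ^ 2 = 2 * b ^ 2 * (3 / 2 * (a / b - 1) ^ 2) := by field_simp
    _ ≤ 2 * b ^ 2 * ((a / b + 2) * klFun (a / b)) := by gcongr
    _ = b * klFun (a / b) * (2 * (a + 2 * b)) := by field_simp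

theorem pinsker_inequality {ι : Type*} [Fintype ι] {p q : ι → ℝ}
    (hp : ∀ i, 0 < p i) (hq : ∀ i, 0 < q i)
    (hp_sum : ∑ i, p i = 1) (hq_sum : ∑ i, q i = 1) :
    1 / 2 * (∑ i, |p i - q i|) ^ 2 ≤ ∑ i, p i * (log (p i) - log (q i)) := by
  have hpq : ∀ i, 0 < p i + 2 * q i := fun i => by linarith [hp i, hq i]
  have hpq_sum : ∑ i, (p i + 2 * q i) = 3 := by
    rw [sum_add_distrib, ← mul_sum, hp_sum, hq_sum]; norm_num
  calc 1 / 2 * (∑ i, |p i - q i|) ^ 2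
      = 3 / 2 * ((∑ i, |p i - q i|) ^ 2 / ∑ i, (p i + 2 * q i)) := by
        rw [hpq_sum]; ring
    _ ≤ 3 / 2 * ∑ i, |p i - q i| ^ 2 / (p i + 2 * q i) := by
        gcongr
        exact sq_sum_div_le_sum_sq_div _ _ fun i _ => hpq i
    _ = ∑ i, 3 * (p i - q i) ^ 2 / (2 * (p i + 2 * q i)) := by
        rw [mul_sum]
        refine sum_congr rfl fun i _ => ?_
        rw [sq_abs]
        field_simp
    _ ≤ ∑ i, (p i * (log (p i) - log (q i)) - p i + q i) :=
        sum_le_sum fun i _ => three_mul_sub_sq_div_le_mul_log_sub (hp i) (hq i)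
    _ = ∑ i, p i * (log (p i) - log (q i)) := by
        rw [sum_add_distrib, sum_sub_distrib, hp_sum, hq_sum]; ring

section Softmax

variable {A : Type*} [Fintype A]

noncomputable def softmax (z : A → ℝ) (a : A) : ℝ := exp (z a) / ∑ b, exp (z b)

lemma softmax_pos (z : A → ℝ) (a : A) : 0 < softmax z a :=
  div_pos (exp_pos _) (sum_pos (fun b _ => exp_pos (z b)) ⟨a, mem_univ a⟩)

lemma sum_softmax [Nonempty A] (z : A → ℝ) : ∑ a, softmax z a = 1 := by
  simp only [softmax, ← sum_div]
  exact div_self (sum_pos (fun b _ => exp_pos (z b)) univ_nonempty).ne'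

lemma log_softmax (z : A → ℝ) (a : A) :
    log (softmax z a) = z a - log (∑ b, exp (z b)) := by
  rw [softmax, log_div (exp_pos _).ne' (sum_pos (fun b _ => exp_pos (z b)) ⟨a, mem_univ a⟩).ne',
    log_exp]

lemma sum_add_const_mul_sub {μ ν : A → ℝ} (h : ∑ a, μ a = ∑ a, ν a) (u : A → ℝ) (c : ℝ) :
    ∑ a, (u a + c) * (μ a - ν a) = ∑ a, u a * (μ a - ν a) := by
  simp only [add_mul, sum_add_distrib, ← mul_sum, sum_sub_distrib, h, sub_self, mul_zero,
    add_zero]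

lemma sum_log_softmax_div_mul_sub {μ ν : A → ℝ} (h : ∑ a, μ a = ∑ a, ν a) (v w : A → ℝ) :
    ∑ a, log (softmax v a / softmax w a) * (μ a - ν a) = ∑ a, (v a - w a) * (μ a - ν a) := by
  rw [← sum_add_const_mul_sub h (fun a => v a - w a)
    (log (∑ b, exp (w b)) - log (∑ b, exp (v b)))]
  refine sum_congr rfl fun a _ => ?_
  rw [log_div (softmax_pos v a).ne' (softmax_pos w a).ne', log_softmax, log_softmax]
  ring

lemma mul_log_div_sub_mul_log_div (x : ℝ) {y z : ℝ} (hy : y ≠ 0) (hz : z ≠ 0) :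
    x * log (x / y) - x * log (x / z) = x * (log z - log y) := by
  rcases eq_or_ne x 0 with rfl | hx
  · simp
  · rw [log_div hx hy, log_div hx hz]; ring

lemma sum_mul_log_div_softmax_sub [Nonempty A] {μ : A → ℝ} (hμ : ∑ a, μ a = 1) (u v : A → ℝ) :
    ∑ a, μ a * log (μ a / softmax v a) - ∑ a, μ a * log (μ a / softmax u a) =
      ∑ a, (u a - v a) * (μ a - softmax v a)
        - ∑ a, softmax v a * (log (softmax v a) - log (softmax u a)) := by
  rw [← sum_log_softmax_div_mul_sub (by rw [hμ, sum_softmax]), ← sum_sub_distrib,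
    ← sum_sub_distrib]
  refine sum_congr rfl fun a _ => ?_
  rw [mul_log_div_sub_mul_log_div _ (softmax_pos v a).ne' (softmax_pos u a).ne',
    log_div (softmax_pos u a).ne' (softmax_pos v a).ne']
  ring

end Softmax

theorem one_step_descent_general {A : Type*} [Fintype A] [Nonempty A]
    (fk fk1 q : A → ℝ) (τk τk1 β : ℝ)
    (πk πk1 π' πstar : A → ℝ)
    (hπk : ∀ a, πk a = Real.exp (fk a / τk) / ∑ b, Real.exp (fk b / τk))
    (hπk1 : ∀ a, πk1 a = Real.exp (fk1 a / τk1) / ∑ b, Real.exp (fk1 b / τk1))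
    (hπ' : ∀ a, π' a =
      Real.exp (q a / β + fk a / τk) / ∑ b, Real.exp (q b / β + fk b / τk))
    (hπssum : ∑ a, πstar a = 1) :
    (∑ a, πstar a * Real.log (πstar a / πk1 a))
      - (∑ a, πstar a * Real.log (πstar a / πk a)) ≤
    (∑ a, Real.log (πk1 a / π' a) * (πk a - πstar a))
      - β⁻¹ * (∑ a, q a * (πstar a - πk a))
      - 1 / 2 * (∑ a, |πk1 a - πk a|) ^ 2
      - ∑ a, (τk1⁻¹ * fk1 a - τk⁻¹ * fk a) * (πk a - πk1 a) := by
  obtain rfl : πk = softmax fun a => fk a / τk := funext hπk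
  obtain rfl : πk1 = softmax fun a => fk1 a / τk1 := funext hπk1
  obtain rfl : π' = softmax fun a => q a / β + fk a / τk := funext hπ'
  set πk := softmax fun a => fk a / τk
  set πk1 := softmax fun a => fk1 a / τk1
  rw [sum_mul_log_div_softmax_sub hπssum,
    sum_log_softmax_div_mul_sub (by rw [sum_softmax, hπssum])]
  have hpinsker := pinsker_inequality (p := πk1) (q := πk) (softmax_pos _) (softmax_pos _)
    (sum_softmax _) (sum_softmax _)
  have hlin : ∑ a, (fk a / τk - fk1 a / τk1) * (πstar a - πk1 a) =
      ∑ a, (fk1 a / τk1 - (q a / β + fk a / τk)) * (πk a - πstar a)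
        - β⁻¹ * ∑ a, q a * (πstar a - πk a)
        - ∑ a, (τk1⁻¹ * fk1 a - τk⁻¹ * fk a) * (πk a - πk1 a) := by
    rw [mul_sum, ← sum_sub_distrib, ← sum_sub_distrib]
    exact sum_congr rfl fun a _ => by ring
  linarith

/-- One-step mirror-descent (Pinsker-type) inequality for softmax policies. -/
theorem one_step_descent {A : Type*} [Fintype A] [Nonempty A]
    (fk fk1 q : A → ℝ) (τk τk1 β : ℝ) (hτk : 0 < τk) (hτk1 : 0 < τk1) (hβ : 0 < β)
    (πk πk1 π' πstar : A → ℝ)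
    (hπk : ∀ a, πk a = Real.exp (fk a / τk) / ∑ b, Real.exp (fk b / τk))
    (hπk1 : ∀ a, πk1 a = Real.exp (fk1 a / τk1) / ∑ b, Real.exp (fk1 b / τk1))
    (hπ' : ∀ a, π' a =
      Real.exp (q a / β + fk a / τk) / ∑ b, Real.exp (q b / β + fk b / τk))
    (hπsnn : ∀ a, 0 ≤ πstar a) (hπssum : ∑ a, πstar a = 1) :
    (∑ a, πstar a * Real.log (πstar a / πk1 a))
      - (∑ a, πstar a * Real.log (πstar a / πk a)) ≤
    (∑ a, Real.log (πk1 a / π' a) * (πk a - πstar a))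
      - β⁻¹ * (∑ a, q a * (πstar a - πk a))
      - 1 / 2 * (∑ a, |πk1 a - πk a|) ^ 2
      - ∑ a, (τk1⁻¹ * fk1 a - τk⁻¹ * fk a) * (πk a - πk1 a) :=
  one_step_descent_general fk fk1 q τk τk1 β πk πk1 π' πstar hπk hπk1 hπ' hπssum
end
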